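/- Let φ := xz and ψ := yz. (i) For any constant real symmetric invertible 3×3 matrix g, the vector field X := ((g₁₂g₃₃−g₁₃g₂₃)x + (g₂₂g₃₃−g₂₃²)y) ∂/∂x + ((g₁₃²−g₁₁g₃₃)x + (g₁₃g₂₃−g₁₂g₃₃)y) ∂/∂y + ((g₁₁g₂₃−g₁₂g₁₃)x + (g₁₂g₂₃−g₁₃g₂₂)y) ∂/∂z satisfies X(u) = 0 and X(v) = 0 on ℝ³, where u := g₁₃x + g₂₃y + g₃₃z and v := ½(g₁₁g₃₃−g₁₃²)x² + (g₁₂g₃₃−g₁₃g₂₃)xy + ½(g₂₂g₃₃−g₂₃²)y². (ii) If moreover g₁₃ = g₂₃ = 0, then [X, Z0'] = 0, where Z0' := −x ∂/∂x − y ∂/∂y + z ∂/∂z (a rescaling of ∇φ × ∇ψ on z ≠ 0). -/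

import Mathlib

noncomputable section

/-- Partial derivative `∂f/∂xⁱ` at `p`. -/
def pd (i : Fin 3) (f : (Fin 3 → ℝ) → ℝ) (p : Fin 3 → ℝ) : ℝ :=
  fderiv ℝ f p (Pi.single i 1)

/-- Gradient of a scalar function. -/
def grad (f : (Fin 3 → ℝ) → ℝ) (p : Fin 3 → ℝ) : Fin 3 → ℝ :=
  fun i => pd i f p

/-- Directional derivative `Σᵢ vⁱ ∂f/∂xⁱ` of `f` along the vector `v` at `p`. -/
def dd (v : Fin 3 → ℝ) (f : (Fin 3 → ℝ) → ℝ) (p : Fin 3 → ℝ) : ℝ :=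
  ∑ i, v i * pd i f p

/-- `(∇_W W)ⁱ = Σⱼ Wʲ ∂Wⁱ/∂xʲ`. -/
def nab (W : (Fin 3 → ℝ) → (Fin 3 → ℝ)) (p : Fin 3 → ℝ) : Fin 3 → ℝ :=
  fun i => ∑ j, W p j * pd j (fun q => W q i) p

/-- Euclidean cross product on `ℝ³`. -/
def cross (a b : Fin 3 → ℝ) : Fin 3 → ℝ :=
  ![a 1 * b 2 - a 2 * b 1, a 2 * b 0 - a 0 * b 2, a 0 * b 1 - a 1 * b 0]

/-- `g(v,w) = Σᵢⱼ gᵢⱼ vⁱ wʲ`. -/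
def gB (g : Matrix (Fin 3) (Fin 3) ℝ) (v w : Fin 3 → ℝ) : ℝ :=
  ∑ i, ∑ j, g i j * v i * w j

/-- Lie bracket of vector fields: `[V,W]ⁱ = Σⱼ (Vʲ ∂Wⁱ/∂xʲ − Wʲ ∂Vⁱ/∂xʲ)`. -/
def lieB (V W : (Fin 3 → ℝ) → (Fin 3 → ℝ)) (p : Fin 3 → ℝ) : Fin 3 → ℝ :=
  fun i => ∑ j, (V p j * pd j (fun q => W q i) p - W p j * pd j (fun q => V q i) p)

/-- curl of a vector field on `ℝ³`. -/
def curl (a : (Fin 3 → ℝ) → (Fin 3 → ℝ)) (p : Fin 3 → ℝ) : Fin 3 → ℝ :=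
  ![pd 1 (fun q => a q 2) p - pd 2 (fun q => a q 1) p,
    pd 2 (fun q => a q 0) p - pd 0 (fun q => a q 2) p,
    pd 0 (fun q => a q 1) p - pd 1 (fun q => a q 0) p]

/-- divergence of a vector field. -/
def divg (W : (Fin 3 → ℝ) → (Fin 3 → ℝ)) (p : Fin 3 → ℝ) : ℝ :=
  ∑ i, pd i (fun q => W q i) p

/-- Euclidean inner product on `ℝ³`. -/
def ip (a b : Fin 3 → ℝ) : ℝ := ∑ i, a i * b i

set_option linter.unusedVariables false

/-! All data of the example are linear or quadratic: `X p = A p`, `u p = a ⬝ p`,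
`v p = p ⬝ S p` and `Z0' p = D p` with `D = diag(-1, -1, 1)`. Hence `X(u) = a ⬝ A p`,
`X(v) = A p ⬝ (S + Sᵀ) p` and `[X, Z0'] p = (D A - A D) p`, so (i) is a polynomial identity
in the entries of `g`, and (ii) holds because `g₁₃ = g₂₃ = 0` kills the `z`-row of `A`,
which then commutes with `D`. -/

open Matrix

section LinearAndQuadratic

variable (p : Fin 3 → ℝ)

lemma dd_eq_dotProduct_grad (v : Fin 3 → ℝ) (f : (Fin 3 → ℝ) → ℝ) :
    dd v f p = v ⬝ᵥ grad f p :=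
  rfl

lemma pd_dotProduct (a : Fin 3 → ℝ) (i : Fin 3) : pd i (fun q => a ⬝ᵥ q) p = a i := by
  have h : HasFDerivAt (fun q => a ⬝ᵥ q) _ p :=
    (LinearMap.toContinuousLinearMap (dotProductBilin ℝ ℝ a)).hasFDerivAt
  rw [pd, h.fderiv]
  simp

lemma pd_mulVec_apply (A : Matrix (Fin 3) (Fin 3) ℝ) (i j : Fin 3) :
    pd j (fun q => (A *ᵥ q) i) p = A i j :=
  pd_dotProduct p (A i) j

lemma grad_dotProduct (a : Fin 3 → ℝ) : grad (fun q => a ⬝ᵥ q) p = a :=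
  funext (pd_dotProduct p a)

lemma grad_dotProduct_mulVec (S : Matrix (Fin 3) (Fin 3) ℝ) :
    grad (fun q => q ⬝ᵥ S *ᵥ q) p = (S + Sᵀ) *ᵥ p := by
  have hS := (LinearMap.toContinuousLinearMap (toLin' S)).hasFDerivAt (x := p)
  have h : HasFDerivAt (fun q => q ⬝ᵥ S *ᵥ q) _ p :=
    (dotProductBilin ℝ ℝ : (Fin 3 → ℝ) →ₗ[ℝ] (Fin 3 → ℝ) →ₗ[ℝ] ℝ).toContinuousBilinearMap
      |>.hasFDerivAt_of_bilinear (hasFDerivAt_id p) hS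
  funext i
  rw [grad, pd, h.fderiv]
  simp [add_mulVec, mulVec_transpose, vecMul]
  exact add_comm _ _

lemma lieB_mulVec (A B : Matrix (Fin 3) (Fin 3) ℝ) :
    lieB (fun q => A *ᵥ q) (fun q => B *ᵥ q) p = (B * A - A * B) *ᵥ p := by
  funext i
  simp only [lieB, pd_mulVec_apply, sub_mulVec, ← mulVec_mulVec, Pi.sub_apply,
    Finset.sum_sub_distrib]
  simp only [mulVec, dotProduct, mul_comm]

end LinearAndQuadratic

theorem example3_case1a1_general
    (g : Matrix (Fin 3) (Fin 3) ℝ)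
    (X : (Fin 3 → ℝ) → (Fin 3 → ℝ))
    (hX : X = fun p =>
      ![(g 0 1 * g 2 2 - g 0 2 * g 1 2) * p 0 + (g 1 1 * g 2 2 - g 1 2 ^ 2) * p 1,
        (g 0 2 ^ 2 - g 0 0 * g 2 2) * p 0 + (g 0 2 * g 1 2 - g 0 1 * g 2 2) * p 1,
        (g 0 0 * g 1 2 - g 0 1 * g 0 2) * p 0 + (g 0 1 * g 1 2 - g 0 2 * g 1 1) * p 1])
    (u v : (Fin 3 → ℝ) → ℝ)
    (hu : u = fun p => g 0 2 * p 0 + g 1 2 * p 1 + g 2 2 * p 2)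
    (hv : v = fun p => 1/2 * (g 0 0 * g 2 2 - g 0 2 ^ 2) * p 0 ^ 2
                        + (g 0 1 * g 2 2 - g 0 2 * g 1 2) * p 0 * p 1
                        + 1/2 * (g 1 1 * g 2 2 - g 1 2 ^ 2) * p 1 ^ 2)
    (Z0' : (Fin 3 → ℝ) → (Fin 3 → ℝ))
    (hZ0' : Z0' = fun p => ![-(p 0), -(p 1), p 2]) :
    (∀ p : Fin 3 → ℝ, dd (X p) u p = 0 ∧ dd (X p) v p = 0) ∧
    (g 0 2 = 0 → g 1 2 = 0 → ∀ p : Fin 3 → ℝ, lieB X Z0' p = 0) := by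
  set A : Matrix (Fin 3) (Fin 3) ℝ :=
    !![g 0 1 * g 2 2 - g 0 2 * g 1 2, g 1 1 * g 2 2 - g 1 2 ^ 2, 0;
       g 0 2 ^ 2 - g 0 0 * g 2 2, g 0 2 * g 1 2 - g 0 1 * g 2 2, 0;
       g 0 0 * g 1 2 - g 0 1 * g 0 2, g 0 1 * g 1 2 - g 0 2 * g 1 1, 0]
  set S : Matrix (Fin 3) (Fin 3) ℝ :=
    !![1/2 * (g 0 0 * g 2 2 - g 0 2 ^ 2), g 0 1 * g 2 2 - g 0 2 * g 1 2, 0;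
       0, 1/2 * (g 1 1 * g 2 2 - g 1 2 ^ 2), 0;
       0, 0, 0]
  set D : Matrix (Fin 3) (Fin 3) ℝ := diagonal ![-1, -1, 1]
  have hXA : X = fun p => A *ᵥ p := by
    subst hX; funext p i; fin_cases i <;> simp [A, mulVec, dotProduct, Fin.sum_univ_three]
  have hua : u = fun p => ![g 0 2, g 1 2, g 2 2] ⬝ᵥ p := by
    subst hu; funext p; simp [dotProduct, Fin.sum_univ_three]
  have hvS : v = fun p => p ⬝ᵥ S *ᵥ p := by
    subst hv; funext p
    simp only [dotProduct, mulVec, of_apply, cons_val', cons_val_fin_one, Fin.sum_univ_three,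
      cons_val_zero, cons_val_one, cons_val, S]
    ring
  have hZD : Z0' = fun p => D *ᵥ p := by
    subst hZ0'; funext p i; fin_cases i <;> simp [D, mulVec_diagonal]
  refine ⟨fun p => ⟨?_, ?_⟩, fun h02 h12 p => ?_⟩
  · rw [dd_eq_dotProduct_grad, hua, grad_dotProduct, hXA]
    simp only [dotProduct, mulVec, of_apply, cons_val', cons_val_fin_one, Fin.sum_univ_three,
      cons_val_zero, cons_val_one, cons_val, A]
    ring
  · rw [dd_eq_dotProduct_grad, hvS, grad_dotProduct_mulVec, hXA]
    simp only [dotProduct, mulVec, of_apply, cons_val', cons_val_fin_one, Fin.sum_univ_three,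
      cons_val_zero, cons_val_one, cons_val, Matrix.add_apply, transpose_apply, A, S]
    ring
  · have hAD : D * A = A * D := by
      ext i j; fin_cases i <;> fin_cases j <;> simp [A, D, h02, h12]
    rw [hXA, hZD, lieB_mulVec, hAD, sub_self, zero_mulVec]

/-- Example 3: for `φ = xz`, `ψ = yz`:
(i) `X(u) = X(v) = 0` on `ℝ³` for the indicated `X`, `u`, `v`;
(ii) if `g₁₃ = g₂₃ = 0` then `[X, Z0'] = 0` where `Z0' = (−x, −y, z)`. -/
theorem example3_case1a1
    (g : Matrix (Fin 3) (Fin 3) ℝ) (hsym : g.IsSymm) (hinv : IsUnit g.det)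
    (φ ψ : (Fin 3 → ℝ) → ℝ)
    (hφ : φ = fun p => p 0 * p 2) (hψ : ψ = fun p => p 1 * p 2)
    (X : (Fin 3 → ℝ) → (Fin 3 → ℝ))
    (hX : X = fun p =>
      ![(g 0 1 * g 2 2 - g 0 2 * g 1 2) * p 0 + (g 1 1 * g 2 2 - g 1 2 ^ 2) * p 1,
        (g 0 2 ^ 2 - g 0 0 * g 2 2) * p 0 + (g 0 2 * g 1 2 - g 0 1 * g 2 2) * p 1,
        (g 0 0 * g 1 2 - g 0 1 * g 0 2) * p 0 + (g 0 1 * g 1 2 - g 0 2 * g 1 1) * p 1])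
    (u v : (Fin 3 → ℝ) → ℝ)
    (hu : u = fun p => g 0 2 * p 0 + g 1 2 * p 1 + g 2 2 * p 2)
    (hv : v = fun p => 1/2 * (g 0 0 * g 2 2 - g 0 2 ^ 2) * p 0 ^ 2
                        + (g 0 1 * g 2 2 - g 0 2 * g 1 2) * p 0 * p 1
                        + 1/2 * (g 1 1 * g 2 2 - g 1 2 ^ 2) * p 1 ^ 2)
    (Z0' : (Fin 3 → ℝ) → (Fin 3 → ℝ))
    (hZ0' : Z0' = fun p => ![-(p 0), -(p 1), p 2]) :
    (∀ p : Fin 3 → ℝ, dd (X p) u p = 0 ∧ dd (X p) v p = 0) ∧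
    (g 0 2 = 0 → g 1 2 = 0 → ∀ p : Fin 3 → ℝ, lieB X Z0' p = 0) :=
  example3_case1a1_general g X hX u v hu hv Z0' hZ0'
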